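/- arXiv:2306.11555 — 6 statements merged into one kernel-verified Lean document; each statement's English description precedes it below -/
import Mathlib

section
/- Suppose φ ∈ ℝ^N solves the discrete Poisson–Boltzmann equation with source ρ_j = Z·∑_{k=1}^{N_p} w_k·S(x_j - x_k), where Z ∈ ℝ, w_k, x_k ∈ ℝ (k = 1,…,N_p), S : ℝ → ℝ, and x_j ∈ ℝ are the grid points. Then the discrete neutrality condition holds: Z·Δx·∑_{j=1}^N ∑_{k=1}^{N_p} w_k·S(x_j - x_k) = Δx·∑_{j=1}^N n₀_j·exp(φ_j/T_j). -/
/-!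
The stencil `(1, -2, 1)` of the periodic second difference is translation invariant and sums to
zero, so every column of `Amat` sums to zero (for `N ≥ 3` the three stencil points are distinct).
Hence `∑ⱼ (𝔸φ)ⱼ = 0`, and summing the Poisson–Boltzmann equation over the grid leaves
total charge = total electron density.
-/

open Matrix BigOperators

/-- The periodic centered second-difference matrix on `Fin N`. -/
noncomputable def Amat (N : ℕ) [NeZero N] (dx : ℝ) : Matrix (Fin N) (Fin N) ℝ :=
  fun j k =>
    if k = j then -2 / dx ^ 2
    else if k = j + 1 then 1 / dx ^ 2
    else if k = j - 1 then 1 / dx ^ 2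
    else 0

theorem Matrix.sum_mulVec_eq_zero_of_sum_col_eq_zero {n R : Type*} [Fintype n]
    [CommSemiring R] {A : Matrix n n R} (hA : ∀ k, ∑ i, A i k = 0) (x : n → R) :
    ∑ i, (A *ᵥ x) i = 0 := by
  simp only [mulVec, dotProduct]
  rw [Finset.sum_comm]
  simp [← Finset.sum_mul, hA]

theorem Fintype.sum_ite_eq_three {ι M : Type*} [Fintype ι] [DecidableEq ι] [AddCommMonoid M]
    {a b c : ι} (hab : a ≠ b) (hac : a ≠ c) (hbc : b ≠ c) (x y z : M) :
    ∑ d, (if d = a then x else if d = b then y else if d = c then z else 0) = x + y + z := by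
  have hsplit : ∀ d, (if d = a then x else if d = b then y else if d = c then z else 0) =
      (if d = a then x else 0) + (if d = b then y else 0) + (if d = c then z else 0) := by
    intro d
    split_ifs <;> simp_all
  simp only [hsplit, Finset.sum_add_distrib, Finset.sum_ite_eq', Finset.mem_univ, if_true]

theorem Fin.zero_one_neg_one_pairwise_ne {N : ℕ} [NeZero N] (hN : 3 ≤ N) :
    (0 : Fin N) ≠ -1 ∧ (0 : Fin N) ≠ 1 ∧ (-1 : Fin N) ≠ 1 := by
  obtain ⟨n, rfl⟩ : ∃ n, N = n + 3 := ⟨N - 3, by omega⟩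
  simp [Fin.ext_iff, Fin.val_neg]

theorem Amat_add_self (N : ℕ) [NeZero N] (dx : ℝ) (k d : Fin N) :
    Amat N dx (k + d) k =
      if d = 0 then -2 / dx ^ 2 else if d = -1 then 1 / dx ^ 2 else if d = 1 then 1 / dx ^ 2
      else 0 := by
  have h0 : k = k + d ↔ d = 0 := by rw [eq_comm, add_eq_left]
  have hm : k = k + d + 1 ↔ d = -1 := by
    rw [eq_comm, add_assoc, add_eq_left, add_eq_zero_iff_eq_neg]
  have hp : k = k + d - 1 ↔ d = 1 := by rw [eq_comm, add_sub_assoc, add_eq_left, sub_eq_zero]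
  simp only [Amat, h0, hm, hp]

theorem sum_col_Amat (N : ℕ) [NeZero N] (hN : 3 ≤ N) (dx : ℝ) (k : Fin N) :
    ∑ j, Amat N dx j k = 0 := by
  obtain ⟨h0m, h01, hm1⟩ := Fin.zero_one_neg_one_pairwise_ne hN
  rw [← Equiv.sum_comp (Equiv.addLeft k)]
  simp only [Equiv.coe_addLeft, Amat_add_self, Fintype.sum_ite_eq_three h0m h01 hm1]
  ring

theorem discrete_neutrality_general (N : ℕ) [NeZero N] (hN : 3 ≤ N) (dx : ℝ)
    (Np : ℕ) (Z : ℝ) (w xp : Fin Np → ℝ) (S : ℝ → ℝ) (xg : Fin N → ℝ)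
    (n0 T : Fin N → ℝ)
    (φ : Fin N → ℝ)
    (hPB : ∀ j, -(Z * ∑ k, w k * S (xg j - xp k)) + (Amat N dx).mulVec φ j
        + n0 j * Real.exp (φ j / T j) = 0) :
    Z * dx * ∑ j : Fin N, ∑ k, w k * S (xg j - xp k)
      = dx * ∑ j : Fin N, n0 j * Real.exp (φ j / T j) := by
  have hA : ∑ j, (Amat N dx *ᵥ φ) j = 0 :=
    sum_mulVec_eq_zero_of_sum_col_eq_zero (sum_col_Amat N hN dx) φ
  have hsum : ∑ j, (-(Z * ∑ k, w k * S (xg j - xp k)) + (Amat N dx *ᵥ φ) j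
      + n0 j * Real.exp (φ j / T j)) = 0 :=
    Finset.sum_eq_zero fun j _ => hPB j
  rw [Finset.sum_add_distrib, Finset.sum_add_distrib, hA, Finset.sum_neg_distrib,
    ← Finset.mul_sum] at hsum
  linear_combination -dx * hsum

/-- any solution of the discrete Poisson–Boltzmann equation with particle source
satisfies the discrete neutrality condition. -/
theorem discrete_neutrality (N : ℕ) [NeZero N] (hN : 3 ≤ N) (dx : ℝ) (hdx : 0 < dx)
    (Np : ℕ) (Z : ℝ) (w xp : Fin Np → ℝ) (S : ℝ → ℝ) (xg : Fin N → ℝ)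
    (n0 T : Fin N → ℝ) (hn0 : ∀ j, 0 < n0 j) (hT : ∀ j, 0 < T j)
    (φ : Fin N → ℝ)
    (hPB : ∀ j, -(Z * ∑ k, w k * S (xg j - xp k)) + (Amat N dx).mulVec φ j
        + n0 j * Real.exp (φ j / T j) = 0) :
    Z * dx * ∑ j : Fin N, ∑ k, w k * S (xg j - xp k)
      = dx * ∑ j : Fin N, n0 j * Real.exp (φ j / T j) :=
  discrete_neutrality_general N hN dx Np Z w xp S xg n0 T φ hPB
end

section
/- Let n₀_j > 0, T_j > 0 and ρ_j > 0 for j = 1,…,N. The discrete energy functional F(φ) = -(Δx/2)·φᵀ𝔸φ + Δx·∑_{j=1}^N n₀_j·T_j·exp(φ_j/T_j) - Δx·∑_{j=1}^N ρ_j·φ_j is coercive on ℝ^N: F(φ) → +∞ as ‖φ‖ → ∞. -/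
open Matrix BigOperators Filter

lemma g_lb {n t r x : ℝ} (hn : 0 < n) (ht : 0 < t) (hr : 0 < r) :
    r * |x| - 4 * r ^ 2 * t / n ≤ n * t * Real.exp (x / t) - r * x := by
  rcases le_or_gt x 0 with hx | hx
  · rw [abs_of_nonpos hx]
    have h1 : 0 < Real.exp (x / t) := Real.exp_pos _
    have h2 : 0 < 4 * r ^ 2 * t / n := by positivity
    nlinarith [mul_pos (mul_pos hn ht) h1]
  · rw [abs_of_pos hx]
    set E := Real.exp (x / t) with hE
    have hy : (0:ℝ) ≤ 1 + x / (2 * t) := by positivity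
    have h1 : 1 + x / (2 * t) ≤ Real.exp (x / (2 * t)) := by
      have := Real.add_one_le_exp (x / (2 * t)); linarith
    have h2 : E = Real.exp (x / (2 * t)) ^ 2 := by
      rw [hE, ← Real.exp_nat_mul]
      · congr 1
        field_simp
        ring
    have hexp : (1 + x / (2 * t)) ^ 2 ≤ E := by
      rw [h2]
      exact pow_le_pow_left₀ hy h1 2
    have h3 : t * (1 + x / (2 * t)) = t + x / 2 := by field_simp
    have hE2 : (t + x / 2) ^ 2 ≤ t ^ 2 * E := by
      calc (t + x / 2) ^ 2 = t ^ 2 * (1 + x / (2 * t)) ^ 2 := by rw [← h3]; ring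
        _ ≤ t ^ 2 * E := mul_le_mul_of_nonneg_left hexp (sq_nonneg t)
    have h4 : n ^ 2 * (t + x / 2) ^ 2 ≤ n ^ 2 * (t ^ 2 * E) :=
      mul_le_mul_of_nonneg_left hE2 (sq_nonneg n)
    have keyt : 0 ≤ t * (n ^ 2 * t * E - 2 * n * r * x + 4 * r ^ 2 * t) := by
      nlinarith [h4, sq_nonneg (n * x / 2 - 2 * r * t), sq_nonneg (n * t),
        mul_nonneg (mul_nonneg (sq_nonneg n) ht.le) hx.le]
    have key : 0 ≤ n ^ 2 * t * E - 2 * n * r * x + 4 * r ^ 2 * t := by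
      by_contra h
      push_neg at h
      nlinarith
    have heq : n * (n * t * E - r * x - (r * x - 4 * r ^ 2 * t / n))
        = n ^ 2 * t * E - 2 * n * r * x + 4 * r ^ 2 * t := by
      field_simp
      ring
    have h5 : 0 ≤ n * (n * t * E - r * x - (r * x - 4 * r ^ 2 * t / n)) := by
      rw [heq]; exact key
    have h6 := div_nonneg h5 hn.le
    rw [mul_div_cancel_left₀ _ hn.ne'] at h6
    linarith

lemma quad_nonpos (N : ℕ) [NeZero N] (hN : 3 ≤ N) (dx : ℝ) (hdx : 0 < dx)
    (φ : Fin N → ℝ) : φ ⬝ᵥ (Amat N dx).mulVec φ ≤ 0 := by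
  obtain ⟨n, rfl⟩ : ∃ n, N = n + 3 := ⟨N - 3, by omega⟩
  have e1 : ∀ j : Fin (n + 3), j + 1 ≠ j := by
    intro j h
    have h2 : j + 1 = j + 0 := by rw [add_zero]; exact h
    have h4 := congrArg Fin.val (add_left_cancel h2)
    simp [Fin.val_one] at h4
  have e2 : ∀ j : Fin (n + 3), j - 1 ≠ j := by
    intro j h
    have h2 : j - 1 + 1 = j + 1 := by rw [h]
    rw [sub_add_cancel] at h2
    have h3 : j + 1 = j + 0 := by rw [add_zero]; exact h2.symm
    have h4 := congrArg Fin.val (add_left_cancel h3)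
    simp [Fin.val_one] at h4
  have e3 : ∀ j : Fin (n + 3), (j : Fin (n+3)) - 1 ≠ j + 1 := by
    intro j h
    have h2 : j - 1 + 1 = j + 1 + 1 := by rw [h]
    rw [sub_add_cancel] at h2
    have h3 : j + (1 + 1) = j + 0 := by rw [add_zero, ← add_assoc]; exact h2.symm
    have h4 := congrArg Fin.val (add_left_cancel h3)
    have h5 : ((1:Fin (n+3)) + 1).val = 2 := by
      rw [Fin.add_def]
      simp [Fin.val_one]
    simp [h5] at h4
  have row : ∀ j : Fin (n + 3), (∑ k, Amat (n + 3) dx j k * φ k)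
      = (-2 / dx ^ 2) * φ j + (1 / dx ^ 2) * φ (j + 1) + (1 / dx ^ 2) * φ (j - 1) := by
    intro j
    have step : ∀ k, Amat (n + 3) dx j k * φ k =
        (if k = j then (-2 / dx ^ 2) * φ j else 0)
        + (if k = j + 1 then (1 / dx ^ 2) * φ (j + 1) else 0)
        + (if k = j - 1 then (1 / dx ^ 2) * φ (j - 1) else 0) := by
      intro k
      simp only [Amat]
      by_cases h1 : k = j
      · subst h1
        simp [(e1 k).symm ∘ Eq.symm, (e2 k).symm ∘ Eq.symm, Ne.symm (e1 k), Ne.symm (e2 k)]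
      · by_cases h2 : k = j + 1
        · subst h2
          simp [h1, Ne.symm (e3 j)]
        · by_cases h3 : k = j - 1
          · subst h3
            simp [h1, h2]
          · simp [h1, h2, h3]
    calc (∑ k, Amat (n + 3) dx j k * φ k) = ∑ k, ((if k = j then (-2 / dx ^ 2) * φ j else 0)
        + (if k = j + 1 then (1 / dx ^ 2) * φ (j + 1) else 0)
        + (if k = j - 1 then (1 / dx ^ 2) * φ (j - 1) else 0)) :=
          Finset.sum_congr rfl fun k _ => step k
      _ = (-2 / dx ^ 2) * φ j + (1 / dx ^ 2) * φ (j + 1) + (1 / dx ^ 2) * φ (j - 1) := by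
          simp [Finset.sum_add_distrib, Finset.sum_ite_eq']
  have reidx : ∑ j : Fin (n+3), φ j * φ (j - 1) = ∑ j : Fin (n+3), φ (j + 1) * φ j := by
    apply Fintype.sum_equiv (Equiv.subRight (1 : Fin (n+3)))
    intro j
    simp [sub_add_cancel]
  have reidx2 : ∑ j : Fin (n+3), φ (j + 1) ^ 2 = ∑ j : Fin (n+3), φ j ^ 2 := by
    apply Fintype.sum_equiv (Equiv.addRight (1 : Fin (n+3)))
    intro j
    simp
  have hQ : φ ⬝ᵥ (Amat (n+3) dx).mulVec φ
      = (2 * ∑ j, φ j * φ (j + 1) - 2 * ∑ j, φ j ^ 2) / dx ^ 2 := by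
    calc φ ⬝ᵥ (Amat (n+3) dx).mulVec φ = ∑ j, φ j * (∑ k, Amat (n+3) dx j k * φ k) := by
          simp [dotProduct, Matrix.mulVec]
      _ = ∑ j, φ j * ((-2 / dx ^ 2) * φ j + (1 / dx ^ 2) * φ (j + 1) + (1 / dx ^ 2) * φ (j - 1)) :=
          Finset.sum_congr rfl fun j _ => by rw [row j]
      _ = (∑ j, (φ j * φ (j+1) + φ j * φ (j-1) - 2 * φ j ^ 2)) / dx ^ 2 := by
          rw [Finset.sum_div]
          refine Finset.sum_congr rfl fun j _ => ?_
          field_simp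
          ring
      _ = (2 * ∑ j, φ j * φ (j + 1) - 2 * ∑ j, φ j ^ 2) / dx ^ 2 := by
          congr 1
          rw [Finset.sum_sub_distrib, Finset.sum_add_distrib, reidx]
          have hc : ∑ j : Fin (n+3), φ (j+1) * φ j = ∑ j : Fin (n+3), φ j * φ (j+1) :=
            Finset.sum_congr rfl fun j _ => mul_comm _ _
          rw [hc, ← Finset.mul_sum]
          ring
  have hs : ∑ j : Fin (n+3), φ j * φ (j + 1) ≤ ∑ j : Fin (n+3), φ j ^ 2 := by
    have h2 : ∀ j : Fin (n+3), 2 * (φ j * φ (j + 1)) ≤ φ j ^ 2 + φ (j + 1) ^ 2 := by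
      intro j; nlinarith [sq_nonneg (φ j - φ (j + 1))]
    have := Finset.sum_le_sum (fun j (_ : j ∈ Finset.univ) => h2 j)
    rw [Finset.sum_add_distrib, reidx2, ← Finset.mul_sum] at this
    linarith
  rw [hQ]
  apply div_nonpos_of_nonpos_of_nonneg
  · linarith
  · positivity

/-- the discrete energy functional is coercive: `F(φ) → +∞` as `‖φ‖ → ∞`. -/
theorem discrete_energy_coercive (N : ℕ) [NeZero N] (hN : 3 ≤ N) (dx : ℝ) (hdx : 0 < dx)
    (n0 T ρ : Fin N → ℝ) (hn0 : ∀ j, 0 < n0 j) (hT : ∀ j, 0 < T j) (hρ : ∀ j, 0 < ρ j) :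
    Filter.Tendsto
      (fun φ : Fin N → ℝ =>
        -(dx / 2) * (φ ⬝ᵥ (Amat N dx).mulVec φ)
          + dx * ∑ j, n0 j * T j * Real.exp (φ j / T j)
          - dx * ∑ j, ρ j * φ j)
      (Bornology.cobounded (Fin N → ℝ)) Filter.atTop := by
  have hne : Nonempty (Fin N) := Fin.pos_iff_nonempty.mp (by omega)
  set ρm := Finset.univ.inf' Finset.univ_nonempty ρ with hρm
  have ρm_pos : 0 < ρm := by
    rw [hρm, Finset.lt_inf'_iff]
    exact fun j _ => hρ j
  have ρm_le : ∀ j, ρm ≤ ρ j := fun j => Finset.inf'_le _ (Finset.mem_univ j)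
  set Cs := ∑ j, 4 * (ρ j) ^ 2 * T j / n0 j with hCs
  have hlow : ∀ φ : Fin N → ℝ,
      dx * ρm * ‖φ‖ - dx * Cs ≤
        -(dx / 2) * (φ ⬝ᵥ (Amat N dx).mulVec φ)
          + dx * ∑ j, n0 j * T j * Real.exp (φ j / T j)
          - dx * ∑ j, ρ j * φ j := by
    intro φ
    have hquad := quad_nonpos N hN dx hdx φ
    have hq : 0 ≤ -(dx / 2) * (φ ⬝ᵥ (Amat N dx).mulVec φ) := by nlinarith [hquad, hdx]
    have hsum : ∑ j, (ρ j * |φ j| - 4 * (ρ j) ^ 2 * T j / n0 j)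
        ≤ ∑ j, (n0 j * T j * Real.exp (φ j / T j) - ρ j * φ j) :=
      Finset.sum_le_sum fun j _ => g_lb (hn0 j) (hT j) (hρ j)
    have hnorm : ‖φ‖ ≤ ∑ j, |φ j| := by
      apply (pi_norm_le_iff_of_nonneg (by positivity)).2
      intro i
      rw [Real.norm_eq_abs]
      exact Finset.single_le_sum (fun j _ => abs_nonneg (φ j)) (Finset.mem_univ i)
    have h2 : ρm * ‖φ‖ ≤ ∑ j, ρ j * |φ j| :=
      calc ρm * ‖φ‖ ≤ ρm * ∑ j, |φ j| := mul_le_mul_of_nonneg_left hnorm ρm_pos.le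
        _ = ∑ j, ρm * |φ j| := Finset.mul_sum _ _ _
        _ ≤ ∑ j, ρ j * |φ j| :=
            Finset.sum_le_sum fun j _ => mul_le_mul_of_nonneg_right (ρm_le j) (abs_nonneg _)
    have h3 : ρm * ‖φ‖ - Cs ≤ ∑ j, (n0 j * T j * Real.exp (φ j / T j) - ρ j * φ j) := by
      rw [Finset.sum_sub_distrib] at hsum
      linarith
    have h4 : dx * (ρm * ‖φ‖ - Cs) ≤
        dx * ∑ j, (n0 j * T j * Real.exp (φ j / T j) - ρ j * φ j) :=
      mul_le_mul_of_nonneg_left h3 hdx.le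
    rw [Finset.sum_sub_distrib, mul_sub] at h4
    linarith
  have h1 : Filter.Tendsto (fun φ : Fin N → ℝ => ‖φ‖)
      (Bornology.cobounded (Fin N → ℝ)) Filter.atTop := tendsto_norm_cobounded_atTop
  have h2 := h1.const_mul_atTop (show (0:ℝ) < dx * ρm by positivity)
  have h3 := Filter.tendsto_atTop_add_const_right (Bornology.cobounded (Fin N → ℝ))
      (-(dx * Cs)) h2
  exact Filter.tendsto_atTop_mono hlow (by simpa [sub_eq_add_neg] using h3)
end

section
/- Let n₀_j > 0, T_j > 0 and ρ_j > 0 for j = 1,…,N. Then there exists φ ∈ ℝ^N solving the discrete Poisson–Boltzmann equation: -ρ_j + (𝔸φ)_j + n₀_j·exp(φ_j/T_j) = 0 for all j = 1,…,N. -/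
open Matrix BigOperators

/-!
The equation is the Euler–Lagrange equation of `E(φ) = ½ φᵀ𝔸φ + ∑ⱼ Tⱼ n₀ⱼ e^{φⱼ/Tⱼ} - ∑ⱼ ρⱼ φⱼ`,
which is neither convex nor concave, so we maximise `E` on the level set
`∑ⱼ n₀ⱼ e^{φⱼ/Tⱼ} = ∑ⱼ ρⱼ`. There every `φⱼ` is bounded above and some `φᵢ` is bounded below,
so `-φᵀ𝔸φ / 2`, which controls the squared oscillation of `φ`, dominates the linear term as
`min φ → -∞`, and the maximum is attained. At a maximiser `∇E = λ ∇(∑ⱼ n₀ⱼ e^{φⱼ/Tⱼ})`; pairing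
with the constant vector `1`, the left side vanishes because `𝔸` has zero column sums and the
constraint holds, while the right side is `λ ∑ⱼ n₀ⱼ e^{φⱼ/Tⱼ} / Tⱼ`, so `λ = 0`.
-/

section Gradient

variable {ι : Type*} [Fintype ι]

noncomputable def dotProductCLM (c : ι → ℝ) : (ι → ℝ) →L[ℝ] ℝ :=
  ∑ j, c j • ContinuousLinearMap.proj j

@[simp]
theorem dotProductCLM_apply (c v : ι → ℝ) : dotProductCLM c v = c ⬝ᵥ v := by
  simp [dotProductCLM, dotProduct]

theorem dotProductCLM_eq_zero_iff [DecidableEq ι] {c : ι → ℝ} : dotProductCLM c = 0 ↔ c = 0 := by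
  refine ⟨fun h => funext fun j => by simpa using congr($h (Pi.single j 1)), ?_⟩
  rintro rfl
  ext
  simp

theorem hasStrictFDerivAt_sum_comp_apply {f : ι → ℝ → ℝ} {f' x : ι → ℝ}
    (hf : ∀ j, HasStrictDerivAt (f j) (f' j) (x j)) :
    HasStrictFDerivAt (fun φ : ι → ℝ => ∑ j, f j (φ j)) (dotProductCLM f') x :=
  (HasStrictFDerivAt.fun_sum fun j _ => (hf j).comp_hasStrictFDerivAt
    (f := fun φ : ι → ℝ => φ j) x (hasStrictFDerivAt_apply j x)).congr_fderiv
    (by ext; simp [dotProduct])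

theorem hasStrictFDerivAt_dotProduct_mulVec_self {M : Matrix ι ι ℝ} (hM : Mᵀ = M) (x : ι → ℝ) :
    HasStrictFDerivAt (fun φ => φ ⬝ᵥ (M *ᵥ φ)) (dotProductCLM (2 • (M *ᵥ x))) x := by
  have hsymm : ∀ v, x ⬝ᵥ (M *ᵥ v) = (M *ᵥ x) ⬝ᵥ v := fun v => by
    rw [dotProduct_mulVec, ← mulVec_transpose, hM]
  have hfun : (fun φ : ι → ℝ => φ ⬝ᵥ (M *ᵥ φ)) = fun φ => ∑ j, φ j * dotProductCLM (M j) φ := by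
    ext; simp [dotProduct, mulVec]
  rw [hfun]
  refine (HasStrictFDerivAt.fun_sum fun j _ => (ContinuousLinearMap.proj j).hasStrictFDerivAt.mul
    (dotProductCLM (M j)).hasStrictFDerivAt).congr_fderiv ?_
  refine ContinuousLinearMap.ext fun v => ?_
  simp only [dotProductCLM_apply, FunLike.coe_sum, Finset.sum_apply, _root_.add_apply,
    _root_.smul_apply, ContinuousLinearMap.proj_apply, smul_eq_mul, Finset.sum_add_distrib,
    two_smul, add_dotProduct]
  nth_rw 1 [← hsymm]
  rfl

end Gradient

theorem IsLocalExtrOn.eq_zero_of_hasStrictFDerivAt_of_apply_ne_zero {E : Type*}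
    [NormedAddCommGroup E] [NormedSpace ℝ E] [CompleteSpace E] {f g : E → ℝ}
    {f' g' : StrongDual ℝ E} {x₀ u : E} (hextr : IsLocalExtrOn f {x | g x = g x₀} x₀)
    (hf : HasStrictFDerivAt f f' x₀) (hg : HasStrictFDerivAt g g' x₀) (hfu : f' u = 0)
    (hgu : g' u ≠ 0) : f' = 0 := by
  obtain ⟨a, b, hab, hcomb⟩ := hextr.exists_multipliers_of_hasStrictFDerivAt_1d hg hf
  have ha : a = 0 := by
    simpa [hfu, hgu] using congr($hcomb u)
  have hb : b ≠ 0 := fun hb => hab (by simp [ha, hb])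
  simpa [ha, hb] using hcomb

theorem abs_sub_add_nsmul_le {G : Type*} [AddMonoid G] {φ : G → ℝ} {g : G} {δ : ℝ}
    (hφ : ∀ x, |φ (x + g) - φ x| ≤ δ) (x : G) (n : ℕ) : |φ (x + n • g) - φ x| ≤ n * δ := by
  induction n with
  | zero => simp
  | succ n ih =>
    calc |φ (x + (n + 1) • g) - φ x|
        ≤ |φ (x + n • g + g) - φ (x + n • g)| + |φ (x + n • g) - φ x| := by
          rw [succ_nsmul, ← add_assoc]; exact abs_sub_le _ _ _
      _ ≤ δ + n * δ := add_le_add (hφ _) ih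
      _ = (n + 1 : ℕ) * δ := by push_cast; ring

open Fin.NatCast in
theorem Fin.sq_sub_le_sq_mul_sum_sq_sub_add_one {N : ℕ} [NeZero N] (φ : Fin N → ℝ) (i k : Fin N) :
    (φ k - φ i) ^ 2 ≤ N ^ 2 * ∑ j, (φ (j + 1) - φ j) ^ 2 := by
  set Q := ∑ j, (φ (j + 1) - φ j) ^ 2
  have hstep : ∀ j, |φ (j + 1) - φ j| ≤ √Q := fun j =>
    Real.abs_le_sqrt (Finset.single_le_sum (fun j _ => sq_nonneg (φ (j + 1) - φ j))
      (Finset.mem_univ j))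
  have hpath : |φ k - φ i| ≤ N * √Q := by
    have h := abs_sub_add_nsmul_le hstep i (k - i).val
    rw [nsmul_one, Fin.cast_val_eq_self, add_sub_cancel] at h
    exact h.trans (mul_le_mul_of_nonneg_right (by exact_mod_cast (k - i).is_lt.le) (by positivity))
  calc (φ k - φ i) ^ 2 = |φ k - φ i| ^ 2 := (sq_abs _).symm
    _ ≤ (N * √Q) ^ 2 := pow_le_pow_left₀ (abs_nonneg _) hpath 2
    _ = N ^ 2 * Q := by rw [mul_pow, Real.sq_sqrt (by positivity)]

section Amat

variable {N : ℕ} [NeZero N]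

theorem Amat_transpose (dx : ℝ) : (Amat N dx)ᵀ = Amat N dx := by
  ext j k
  have e1 : j = k + 1 ↔ k = j - 1 := by rw [eq_sub_iff_add_eq, eq_comm]
  have e2 : j = k - 1 ↔ k = j + 1 := by rw [eq_sub_iff_add_eq, eq_comm]
  simp only [transpose_apply, Amat, e1, e2, eq_comm (a := j)]
  split_ifs <;> rfl

theorem Amat_mulVec_apply (hN : 3 ≤ N) (dx : ℝ) (φ : Fin N → ℝ) (j : Fin N) :
    (Amat N dx *ᵥ φ) j = (φ (j + 1) + φ (j - 1) - 2 * φ j) / dx ^ 2 := by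
  obtain ⟨n, rfl⟩ : ∃ n, N = n + 3 := ⟨N - 3, by omega⟩
  have h1 : j + 1 ≠ j := by simp
  have h2 : j - 1 ≠ j := by simp
  have h3 : j + 1 ≠ j - 1 := by
    rw [ne_eq, eq_sub_iff_add_eq, add_assoc, add_eq_left]
    simp [Fin.ext_iff, Fin.val_add, Nat.mod_eq_of_lt (show 2 < n + 3 by omega)]
  have hentry : ∀ k, Amat (n + 3) dx j k = (if k = j + 1 then 1 / dx ^ 2 else 0)
      + (if k = j - 1 then 1 / dx ^ 2 else 0) + (if k = j then -2 / dx ^ 2 else 0) := by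
    intro k
    unfold Amat
    split_ifs <;> simp_all
  simp only [mulVec, dotProduct, hentry, add_mul, ite_mul, zero_mul, Finset.sum_add_distrib,
    Finset.sum_ite_eq', Finset.mem_univ, if_true]
  ring

theorem sum_Amat_mulVec (hN : 3 ≤ N) (dx : ℝ) (φ : Fin N → ℝ) :
    ∑ j, (Amat N dx *ᵥ φ) j = 0 := by
  have h1 : ∑ j, φ (j + 1) = ∑ j, φ j := Equiv.sum_comp (Equiv.addRight 1) φ
  have h2 : ∑ j, φ (j - 1) = ∑ j, φ j := Equiv.sum_comp (Equiv.subRight 1) φ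
  simp only [Amat_mulVec_apply hN, ← Finset.sum_div, Finset.sum_sub_distrib,
    Finset.sum_add_distrib, ← Finset.mul_sum, h1, h2]
  ring

theorem dotProduct_Amat_mulVec_self (hN : 3 ≤ N) (dx : ℝ) (φ : Fin N → ℝ) :
    φ ⬝ᵥ (Amat N dx *ᵥ φ) = -(∑ j, (φ (j + 1) - φ j) ^ 2) / dx ^ 2 := by
  have shift : ∀ f : Fin N → ℝ, ∑ j, f (j + 1) = ∑ j, f j := Equiv.sum_comp (Equiv.addRight 1)
  have h1 : ∑ j, φ j * φ (j - 1) = ∑ j, φ (j + 1) * φ j := by rw [← shift]; simp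
  have h2 : ∑ j, φ (j + 1) ^ 2 = ∑ j, φ j ^ 2 := shift (φ · ^ 2)
  simp only [dotProduct, Amat_mulVec_apply hN, mul_div_assoc', ← Finset.sum_div]
  congr 1
  calc ∑ j, φ j * (φ (j + 1) + φ (j - 1) - 2 * φ j)
      = ∑ j, (-(φ (j + 1) - φ j) ^ 2 + (φ j * φ (j - 1) - φ (j + 1) * φ j)
          + (φ (j + 1) ^ 2 - φ j ^ 2)) := Finset.sum_congr rfl fun j _ => by ring
    _ = -∑ j, (φ (j + 1) - φ j) ^ 2 := by
      simp only [Finset.sum_add_distrib, Finset.sum_sub_distrib, Finset.sum_neg_distrib, h1, h2]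
      ring

end Amat

theorem hasStrictDerivAt_mul_exp_div (a T t : ℝ) :
    HasStrictDerivAt (fun t => a * Real.exp (t / T)) (a * Real.exp (t / T) / T) t := by
  simpa [div_eq_mul_inv, mul_assoc] using
    ((Real.hasStrictDerivAt_exp _).comp t ((hasStrictDerivAt_id t).div_const T)).const_mul a

namespace PoissonBoltzmann

section Boltzmann

variable {ι : Type*} {n0 T : ι → ℝ}

noncomputable def boltzmann (n0 T φ : ι → ℝ) : ι → ℝ := fun j => n0 j * Real.exp (φ j / T j)

theorem boltzmann_pos {j : ι} (hn0 : 0 < n0 j) (φ : ι → ℝ) : 0 < boltzmann n0 T φ j :=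
  mul_pos hn0 (Real.exp_pos _)

variable [Fintype ι]

theorem boltzmann_le_sum (hn0 : ∀ j, 0 ≤ n0 j) (φ : ι → ℝ) (j : ι) :
    boltzmann n0 T φ j ≤ ∑ k, boltzmann n0 T φ k :=
  Finset.single_le_sum (f := boltzmann n0 T φ) (fun k _ => mul_nonneg (hn0 k) (Real.exp_nonneg _))
    (Finset.mem_univ j)

theorem hasStrictFDerivAt_sum_boltzmann (n0 T x : ι → ℝ) :
    HasStrictFDerivAt (fun φ => ∑ j, boltzmann n0 T φ j)
      (dotProductCLM fun j => boltzmann n0 T x j / T j) x :=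
  hasStrictFDerivAt_sum_comp_apply (f := fun j t => n0 j * Real.exp (t / T j))
    fun _ => hasStrictDerivAt_mul_exp_div _ _ _

theorem le_mul_log_of_sum_boltzmann_eq (hn0 : ∀ j, 0 < n0 j) (hT : ∀ j, 0 < T j) {φ : ι → ℝ}
    {S : ℝ} (hφ : ∑ k, boltzmann n0 T φ k = S) (j : ι) : φ j ≤ T j * Real.log (S / n0 j) := by
  have hle : boltzmann n0 T φ j ≤ S := hφ ▸ boltzmann_le_sum (fun k => (hn0 k).le) φ j
  have hS : 0 < S := (boltzmann_pos (hn0 j) φ).trans_le hle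
  rwa [boltzmann, ← le_div_iff₀' (hn0 j), ← Real.le_log_iff_exp_le (div_pos hS (hn0 j)),
    div_le_iff₀' (hT j)] at hle

theorem exists_mul_log_le_of_sum_boltzmann_eq [Nonempty ι] (hn0 : ∀ j, 0 < n0 j)
    (hT : ∀ j, 0 < T j) {φ : ι → ℝ} {S : ℝ} (hS : 0 < S) (hφ : ∑ k, boltzmann n0 T φ k = S) :
    ∃ i, T i * Real.log (S / Fintype.card ι / n0 i) ≤ φ i := by
  obtain ⟨i, -, hi⟩ := Finset.exists_le_of_sum_le (f := fun _ => S / Fintype.card ι)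
    (g := boltzmann n0 T φ) Finset.univ_nonempty (by simp [hφ, mul_div_cancel₀])
  refine ⟨i, ?_⟩
  unfold boltzmann at hi
  rwa [← div_le_iff₀' (hn0 i),
    ← Real.log_le_iff_le_exp (div_pos (div_pos hS (Nat.cast_pos.2 Fintype.card_pos)) (hn0 i)),
    le_div_iff₀' (hT i)] at hi

end Boltzmann

section Energy

variable {N : ℕ} [NeZero N] {dx : ℝ} {n0 T ρ : Fin N → ℝ}

noncomputable def energy (dx : ℝ) (n0 T ρ φ : Fin N → ℝ) : ℝ :=
  1 / 2 * φ ⬝ᵥ (Amat N dx *ᵥ φ) + ∑ j, (T j * boltzmann n0 T φ j - ρ j * φ j)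

theorem hasStrictFDerivAt_energy (hT : ∀ j, T j ≠ 0) (x : Fin N → ℝ) :
    HasStrictFDerivAt (energy dx n0 T ρ) (dotProductCLM (-ρ + Amat N dx *ᵥ x + boltzmann n0 T x))
      x := by
  have hquad := (hasStrictFDerivAt_dotProduct_mulVec_self (Amat_transpose dx) x).const_mul (1 / 2)
  have hsep := hasStrictFDerivAt_sum_comp_apply
    (f := fun j t => T j * (n0 j * Real.exp (t / T j)) - ρ j * t) (x := x) fun j =>
      ((hasStrictDerivAt_mul_exp_div (n0 j) (T j) (x j)).const_mul (T j)).sub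
        ((hasStrictDerivAt_id (x j)).const_mul (ρ j))
  refine (hquad.add hsep).congr_fderiv (ContinuousLinearMap.ext fun v => ?_)
  simp only [_root_.add_apply, _root_.smul_apply, dotProductCLM_apply, dotProduct, smul_eq_mul,
    Finset.mul_sum, ← Finset.sum_add_distrib, Pi.add_apply, Pi.neg_apply, Pi.smul_apply,
    boltzmann, mul_div_cancel₀ _ (hT _), mul_one]
  exact Finset.sum_congr rfl fun j _ => by ring

theorem energy_le_of_sum_boltzmann_eq (hN : 3 ≤ N) (hdx : dx ≠ 0) (hn0 : ∀ j, 0 ≤ n0 j)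
    (hT : ∀ j, 0 ≤ T j) (hρ : ∀ j, 0 ≤ ρ j) {φ : Fin N → ℝ}
    (hφ : ∑ j, boltzmann n0 T φ j = ∑ j, ρ j) {k : Fin N} (hk : ∀ j, φ k ≤ φ j) (i : Fin N) :
    energy dx n0 T ρ φ ≤
      -(φ i - φ k) ^ 2 / (2 * N ^ 2 * dx ^ 2) + (∑ j, ρ j) * (∑ j, T j) - (∑ j, ρ j) * φ k := by
  have hquad : 1 / 2 * φ ⬝ᵥ (Amat N dx *ᵥ φ) ≤ -(φ i - φ k) ^ 2 / (2 * N ^ 2 * dx ^ 2) := by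
    have hosc := Fin.sq_sub_le_sq_mul_sum_sq_sub_add_one φ k i
    rw [dotProduct_Amat_mulVec_self hN]
    calc 1 / 2 * (-(∑ j, (φ (j + 1) - φ j) ^ 2) / dx ^ 2)
        = -(N ^ 2 * ∑ j, (φ (j + 1) - φ j) ^ 2) / (2 * N ^ 2 * dx ^ 2) := by field_simp
      _ ≤ -(φ i - φ k) ^ 2 / (2 * N ^ 2 * dx ^ 2) := by gcongr
  have hexp : ∑ j, T j * boltzmann n0 T φ j ≤ (∑ j, ρ j) * ∑ j, T j := by
    rw [Finset.mul_sum]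
    refine Finset.sum_le_sum fun j _ => ?_
    rw [mul_comm]
    gcongr
    · exact hT j
    · exact hφ ▸ boltzmann_le_sum hn0 φ j
  have hlin : (∑ j, ρ j) * φ k ≤ ∑ j, ρ j * φ j := by
    rw [Finset.sum_mul]
    exact Finset.sum_le_sum fun j _ => mul_le_mul_of_nonneg_left (hk j) (hρ j)
  rw [energy, Finset.sum_sub_distrib]
  linarith

open Filter in
theorem exists_forall_le_of_le_energy (hN : 3 ≤ N) (hdx : dx ≠ 0) (hn0 : ∀ j, 0 < n0 j)
    (hT : ∀ j, 0 < T j) (hρ : ∀ j, 0 < ρ j) (E : ℝ) :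
    ∃ R, ∀ φ, ∑ j, boltzmann n0 T φ j = ∑ j, ρ j → E ≤ energy dx n0 T ρ φ → ∀ j, R ≤ φ j := by
  set S := ∑ j, ρ j
  have hS : 0 < S := Finset.sum_pos (fun j _ => hρ j) Finset.univ_nonempty
  obtain ⟨i₀, hi₀⟩ := Finite.exists_min fun i => T i * Real.log (S / N / n0 i)
  set m := T i₀ * Real.log (S / N / n0 i₀)
  set c := 2 * (N : ℝ) ^ 2 * dx ^ 2
  have hc : 0 < c := by positivity
  -- the bound of `energy_le_of_sum_boltzmann_eq`, for `φ i ≥ m`, as a function of `t = min φ`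
  have hψ : Tendsto (fun t => -(m - t) ^ 2 / c + S * ∑ j, T j - S * t) atBot atBot := by
    have hu : Tendsto (fun t : ℝ => m - t) atBot atTop :=
      tendsto_atTop_add_const_left _ m tendsto_neg_atBot_atTop
    have hv : Tendsto (fun t => S - (m - t) / c) atBot atBot :=
      tendsto_atBot_add_const_left _ S (tendsto_neg_atTop_atBot.comp (hu.atTop_div_const hc))
    refine (tendsto_atBot_add_const_right _ (S * ∑ j, T j - S * m)
      (hu.atTop_mul_atBot₀ hv)).congr fun t => ?_
    field_simp
    ring
  obtain ⟨R, hR⟩ := (hψ.eventually (eventually_lt_atBot E)).exists_forall_of_atBot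
  refine ⟨min R m, fun φ hφ hE j => ?_⟩
  obtain ⟨k, hk⟩ := Finite.exists_min φ
  obtain ⟨i, hi⟩ := exists_mul_log_le_of_sum_boltzmann_eq hn0 hT hS hφ
  rw [Fintype.card_fin] at hi
  by_contra! hj
  have hkR : φ k ≤ R := (hk j).trans (hj.le.trans (min_le_left _ _))
  have hkm : φ k ≤ m := (hk j).trans (hj.le.trans (min_le_right _ _))
  have hosc : -(φ i - φ k) ^ 2 / c ≤ -(m - φ k) ^ 2 / c := by
    gcongr
    linarith [hi₀ i]
  have := energy_le_of_sum_boltzmann_eq hN hdx (fun j => (hn0 j).le) (fun j => (hT j).le)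
    (fun j => (hρ j).le) hφ hk i
  linarith [hR (φ k) hkR]

theorem exists_isMaxOn_energy (hN : 3 ≤ N) (hdx : dx ≠ 0) (hn0 : ∀ j, 0 < n0 j)
    (hT : ∀ j, 0 < T j) (hρ : ∀ j, 0 < ρ j) :
    ∃ x, ∑ j, boltzmann n0 T x j = ∑ j, ρ j ∧
      IsMaxOn (energy dx n0 T ρ) {φ | ∑ j, boltzmann n0 T φ j = ∑ j, ρ j} x := by
  set M := {φ | ∑ j, boltzmann n0 T φ j = ∑ j, ρ j}
  set φ₀ : Fin N → ℝ := fun j => T j * Real.log (ρ j / n0 j)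
  have hφ₀ : φ₀ ∈ M := by
    refine Finset.sum_congr rfl fun j _ => ?_
    rw [boltzmann, mul_div_cancel_left₀ _ (hT j).ne', Real.exp_log (div_pos (hρ j) (hn0 j)),
      mul_div_cancel₀ _ (hn0 j).ne']
  obtain ⟨R, hR⟩ := exists_forall_le_of_le_energy hN hdx hn0 hT hρ (energy dx n0 T ρ φ₀)
  have hcont : Continuous (energy dx n0 T ρ) := continuous_iff_continuousAt.2 fun x =>
    (hasStrictFDerivAt_energy (fun j => (hT j).ne') x).continuousAt
  have hM : IsClosed M := isClosed_eq (by unfold boltzmann; fun_prop) continuous_const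
  have hK : IsCompact (Set.Icc (fun _ => R) fun j => T j * Real.log ((∑ j, ρ j) / n0 j)) :=
    isCompact_Icc
  exact hcont.continuousOn.exists_isMaxOn' hM hφ₀ <|
    Filter.mem_inf_of_inter hK.compl_mem_cocompact (Filter.mem_principal_self M)
      fun φ ⟨hφK, hφM⟩ => not_lt.1 fun hlt =>
        hφK ⟨fun j => hR φ hφM hlt.le j, le_mul_log_of_sum_boltzmann_eq hn0 hT hφM⟩

end Energy

end PoissonBoltzmann

open PoissonBoltzmann

/-- existence of a solution of the discrete Poisson–Boltzmann equation. -/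
theorem discrete_PoissonBoltzmann_exists (N : ℕ) [NeZero N] (hN : 3 ≤ N) (dx : ℝ)
    (hdx : 0 < dx) (n0 T ρ : Fin N → ℝ)
    (hn0 : ∀ j, 0 < n0 j) (hT : ∀ j, 0 < T j) (hρ : ∀ j, 0 < ρ j) :
    ∃ φ : Fin N → ℝ, ∀ j,
      -ρ j + (Amat N dx).mulVec φ j + n0 j * Real.exp (φ j / T j) = 0 := by
  obtain ⟨x, hxM, hmax⟩ := exists_isMaxOn_energy hN hdx.ne' hn0 hT hρ
  have hextr : IsLocalExtrOn (energy dx n0 T ρ)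
      {φ | ∑ j, boltzmann n0 T φ j = ∑ j, boltzmann n0 T x j} x := by
    rw [hxM]
    exact Or.inr hmax.localize
  have hgrad := hextr.eq_zero_of_hasStrictFDerivAt_of_apply_ne_zero
    (hasStrictFDerivAt_energy (fun j => (hT j).ne') x) (hasStrictFDerivAt_sum_boltzmann n0 T x)
    (u := 1) ?_ ?_
  · exact ⟨x, fun j => congr_fun (dotProductCLM_eq_zero_iff.1 hgrad) j⟩
  · simp [dotProduct_one, Finset.sum_add_distrib, sum_Amat_mulVec hN, hxM]
  · rw [dotProductCLM_apply, dotProduct_one]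
    exact (Finset.sum_pos (fun j _ => div_pos (boltzmann_pos (hn0 j) x) (hT j))
      Finset.univ_nonempty).ne'
end

section
/- Let S : ℝ → ℝ be continuously differentiable with derivative S', fix Z ∈ ℝ, grid points x_j ∈ ℝ and positive reals n₀_j, T_j (j = 1,…,N), and particle weights w_k ∈ ℝ (k = 1,…,N_p). Suppose φ : ℝ^{N_p} → ℝ^N is differentiable and satisfies the discrete Poisson–Boltzmann constraint identically: for every X = (x_1,…,x_{N_p}) ∈ ℝ^{N_p} and every j, -Z·∑_{k=1}^{N_p} w_k·S(x_j - x_k) + (𝔸φ(X))_j + n₀_j·exp(φ_j(X)/T_j) = 0. Define the discrete Hamiltonian H(X, V) = -(Δx/2)·φ(X)ᵀ𝔸φ(X) + Z·∑_{j=1}^N Δx·∑_{k=1}^{N_p} w_k·S(x_j - x_k)·φ_j(X) + (1/2)·∑_{k=1}^{N_p} w_k·v_k² - Δx·∑_{j=1}^N T_j·n₀_j·exp(φ_j(X)/T_j). Then for every k: ∂H/∂x_k = -Z·w_k·∑_{j=1}^N Δx·S'(x_j - x_k)·φ_j(X), i.e. all terms involving derivatives of φ with respect to x_k cancel due to the constraint;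 consequently the weighted Hamiltonian system ẋ_k = (1/w_k)·∂H/∂v_k, v̇_k = -(1/w_k)·∂H/∂x_k coincides with the equations of motion ẋ_k = v_k, v̇_k = Z·∑_{j=1}^N Δx·S'(x_j - x_k)·φ_j(X). -/
/-!
The field part of the Hamiltonian, `E(ρ, ψ) = -(Δx/2) ψᵀ𝔸ψ + Δx ρ·ψ - Δx ∑ⱼ Tⱼ n₀ⱼ exp(ψⱼ/Tⱼ)`, has
`ψ`-gradient `Δx (ρ - 𝔸ψ - n₀ exp(ψ/T))` because `𝔸` is symmetric, and the Poisson–Boltzmann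
constraint says exactly that this gradient vanishes at `ψ = φ(X)`, `ρ = ρ(X)`. By the chain rule
(an envelope argument) `∂H/∂x_k` therefore only sees the explicit dependence of the charge density
`ρⱼ(X) = Z ∑ₖ wₖ S(xⱼ - x_k)` on `x_k`, whatever the derivative of `φ` is.
-/

open Matrix BigOperators

theorem Amat_isSymm (N : ℕ) [NeZero N] (dx : ℝ) : (Amat N dx).IsSymm := by
  refine IsSymm.ext fun i j => ?_
  simp only [Amat, eq_sub_iff_add_eq]
  split_ifs <;> grind

section Calculus

variable {ι κ : Type*} [Fintype ι] {u v : ℝ → ι → ℝ} {u' v' : ι → ℝ} {t : ℝ}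

theorem HasDerivAt.dotProduct (hu : HasDerivAt u u' t) (hv : HasDerivAt v v' t) :
    HasDerivAt (fun s => u s ⬝ᵥ v s) (u' ⬝ᵥ v t + u t ⬝ᵥ v') t :=
  (HasDerivAt.fun_sum fun i _ => (hasDerivAt_pi.1 hu i).fun_mul (hasDerivAt_pi.1 hv i)).congr_deriv
    Finset.sum_add_distrib

theorem HasDerivAt.mulVec (A : Matrix κ ι ℝ) (hu : HasDerivAt u u' t) :
    HasDerivAt (fun s => A *ᵥ u s) (A *ᵥ u') t :=
  hasDerivAt_pi.2 fun i => HasDerivAt.fun_sum fun j _ => (hasDerivAt_pi.1 hu j).const_mul (A i j)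

theorem dotProduct_mulVec_comm_of_isSymm {A : Matrix ι ι ℝ} (hA : A.IsSymm) (x y : ι → ℝ) :
    x ⬝ᵥ A *ᵥ y = y ⬝ᵥ A *ᵥ x := by
  rw [dotProduct_mulVec, ← mulVec_transpose, hA.eq, dotProduct_comm]

theorem HasDerivAt.dotProduct_mulVec_self {A : Matrix ι ι ℝ} (hA : A.IsSymm)
    (hu : HasDerivAt u u' t) :
    HasDerivAt (fun s => u s ⬝ᵥ A *ᵥ u s) (2 * (u' ⬝ᵥ A *ᵥ u t)) t := by
  convert hu.dotProduct (hu.mulVec A) using 1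
  rw [dotProduct_mulVec_comm_of_isSymm hA (u t)]
  ring

end Calculus

section FieldEnergy

variable {ι : Type*} [Fintype ι] (A : Matrix ι ι ℝ) (dx : ℝ) (n0 T : ι → ℝ)

noncomputable def fieldEnergy (ρ ψ : ι → ℝ) : ℝ :=
  -(dx / 2) * (ψ ⬝ᵥ A *ᵥ ψ) + dx * (ρ ⬝ᵥ ψ) - dx * ∑ j, T j * n0 j * Real.exp (ψ j / T j)

noncomputable def poissonBoltzmannResidual (ρ ψ : ι → ℝ) : ι → ℝ :=
  ρ - A *ᵥ ψ - fun j => n0 j * Real.exp (ψ j / T j)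

variable {A T} {ρ ψ : ℝ → ι → ℝ} {ρ' ψ' : ι → ℝ} {t : ℝ}

theorem hasDerivAt_fieldEnergy (hA : A.IsSymm) (hT : ∀ j, T j ≠ 0) (hρ : HasDerivAt ρ ρ' t)
    (hψ : HasDerivAt ψ ψ' t) :
    HasDerivAt (fun s => fieldEnergy A dx n0 T (ρ s) (ψ s))
      (dx * (ρ' ⬝ᵥ ψ t) + dx * (ψ' ⬝ᵥ poissonBoltzmannResidual A n0 T (ρ t) (ψ t))) t := by
  have hexp : HasDerivAt (fun s => ∑ j, T j * n0 j * Real.exp (ψ s j / T j))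
      (ψ' ⬝ᵥ fun j => n0 j * Real.exp (ψ t j / T j)) t := by
    refine (HasDerivAt.fun_sum fun j _ =>
      (((hasDerivAt_pi.1 hψ j).div_const (T j)).exp).const_mul (T j * n0 j)).congr_deriv ?_
    refine Finset.sum_congr rfl fun j _ => ?_
    field_simp [hT j]
  refine ((((hψ.dotProduct_mulVec_self hA).const_mul (-(dx / 2))).add
    ((hρ.dotProduct hψ).const_mul dx)).sub (hexp.const_mul dx)).congr_deriv ?_
  simp only [poissonBoltzmannResidual, dotProduct_sub, dotProduct_comm (ρ t) ψ']
  ring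

end FieldEnergy

section Particles

variable {ι κ : Type*} [Fintype κ] [DecidableEq κ] (Z : ℝ) (w : κ → ℝ) (S : ℝ → ℝ) (xg : ι → ℝ)

noncomputable def chargeDensity (X : κ → ℝ) : ι → ℝ :=
  fun j => Z * ∑ k, w k * S (xg j - X k)

noncomputable def kineticEnergy (V : κ → ℝ) : ℝ :=
  (1 / 2) * ∑ k, w k * V k ^ 2

theorem hasDerivAt_chargeDensity_update {S' : ℝ → ℝ} (hS : ∀ x, HasDerivAt S (S' x) x)
    (X : κ → ℝ) (k : κ) :
    HasDerivAt (fun t => chargeDensity Z w S xg (Function.update X k t))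
      (fun j => -(Z * w k * S' (xg j - X k))) (X k) := by
  refine hasDerivAt_pi.2 fun j => ?_
  have hupd := hasDerivAt_pi.1 (hasDerivAt_update X k (X k))
  refine ((HasDerivAt.fun_sum fun l _ =>
    ((hS _).comp _ ((hupd l).const_sub (xg j))).const_mul (w l)).const_mul Z).congr_deriv ?_
  simp only [Function.update_eq_self, Pi.single_apply, mul_neg, mul_ite, mul_one, mul_zero,
    Finset.sum_neg_distrib, Finset.sum_ite_eq', Finset.mem_univ, if_true]
  ring

theorem hasDerivAt_kineticEnergy_update (V : κ → ℝ) (k : κ) :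
    HasDerivAt (fun t => kineticEnergy w (Function.update V k t)) (w k * V k) (V k) := by
  have hupd := hasDerivAt_pi.1 (hasDerivAt_update V k (V k))
  refine ((HasDerivAt.fun_sum fun l _ => ((hupd l).fun_pow 2).const_mul (w l)).const_mul
    (1 / 2 : ℝ)).congr_deriv ?_
  simp only [Function.update_eq_self, Pi.single_apply, mul_ite, mul_one, mul_zero,
    Finset.sum_ite_eq', Finset.mem_univ, if_true]
  ring

end Particles

theorem hamiltonian_partials_with_constraint_general (N : ℕ) [NeZero N] (dx : ℝ)
    (Np : ℕ) (Z : ℝ) (w : Fin Np → ℝ) (hw : ∀ k, w k ≠ 0)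
    (S S' : ℝ → ℝ) (hS : ∀ x, HasDerivAt S (S' x) x)
    (xg : Fin N → ℝ) (n0 T : Fin N → ℝ) (hT : ∀ j, 0 < T j)
    (φ : (Fin Np → ℝ) → Fin N → ℝ) (hφ : Differentiable ℝ φ)
    (hcon : ∀ (X : Fin Np → ℝ) (j : Fin N),
      -(Z * ∑ k, w k * S (xg j - X k)) + (Amat N dx).mulVec (φ X) j
        + n0 j * Real.exp (φ X j / T j) = 0)
    (H : (Fin Np → ℝ) → (Fin Np → ℝ) → ℝ)
    (hH : ∀ X V, H X V =
        -(dx / 2) * (φ X ⬝ᵥ (Amat N dx).mulVec (φ X))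
          + Z * ∑ j, dx * ∑ k, w k * S (xg j - X k) * φ X j
          + (1 / 2) * ∑ k, w k * (V k) ^ 2
          - dx * ∑ j, T j * n0 j * Real.exp (φ X j / T j)) :
    (∀ (X V : Fin Np → ℝ) (k : Fin Np),
      HasDerivAt (fun t : ℝ => H (Function.update X k t) V)
        (-(Z * w k * ∑ j, dx * S' (xg j - X k) * φ X j)) (X k)) ∧
    (∀ (X V : Fin Np → ℝ) (k : Fin Np),
      HasDerivAt (fun t : ℝ => H X (Function.update V k t)) (w k * V k) (V k)) ∧
    (∀ (X V : Fin Np → ℝ) (k : Fin Np),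
      (1 / w k) * deriv (fun t : ℝ => H X (Function.update V k t)) (V k) = V k ∧
      -(1 / w k) * deriv (fun t : ℝ => H (Function.update X k t) V) (X k)
        = Z * ∑ j, dx * S' (xg j - X k) * φ X j) := by
  have hH_split : ∀ X V, H X V =
      fieldEnergy (Amat N dx) dx n0 T (chargeDensity Z w S xg X) (φ X) + kineticEnergy w V := by
    intro X V
    simp only [hH, fieldEnergy, kineticEnergy, chargeDensity, dotProduct, Finset.mul_sum,
      Finset.sum_mul]
    ring_nf
  have hres : ∀ X,
      poissonBoltzmannResidual (Amat N dx) n0 T (chargeDensity Z w S xg X) (φ X) = 0 :=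
    fun X => funext fun j => by
      simp only [poissonBoltzmannResidual, Pi.sub_apply, Pi.zero_apply, chargeDensity]
      linarith [hcon X j]
  have hX : ∀ X V k, HasDerivAt (fun t : ℝ => H (Function.update X k t) V)
      (-(Z * w k * ∑ j, dx * S' (xg j - X k) * φ X j)) (X k) := by
    intro X V k
    have hφk := (hφ X).hasFDerivAt.comp_hasDerivAt_of_eq (X k) (hasDerivAt_update X k (X k))
      (Function.update_eq_self k X).symm
    have hfield := (hasDerivAt_fieldEnergy dx n0 (Amat_isSymm N dx) (fun j => (hT j).ne')
      (hasDerivAt_chargeDensity_update Z w S xg hS X k) hφk).add_const (kineticEnergy w V)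
    simp only [hH_split]
    refine hfield.congr_deriv ?_
    rw [Function.comp_apply, Function.update_eq_self, hres, dotProduct_zero, mul_zero, add_zero]
    simp only [dotProduct, Finset.mul_sum, ← Finset.sum_neg_distrib]
    exact Finset.sum_congr rfl fun j _ => by ring
  have hV : ∀ X V k, HasDerivAt (fun t : ℝ => H X (Function.update V k t)) (w k * V k) (V k) := by
    intro X V k
    simpa only [hH_split] using (hasDerivAt_kineticEnergy_update w V k).const_add _
  refine ⟨hX, hV, fun X V k => ⟨?_, ?_⟩⟩
  · rw [(hV X V k).deriv]
    field_simp [hw k]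
  · rw [(hX X V k).deriv]
    field_simp [hw k]

/-- with the electrostatic potential determined from the particle positions by the
discrete Poisson–Boltzmann constraint, all terms involving derivatives of `φ` cancel in
`∂H/∂x_k`, so `∂H/∂x_k = -Z wₖ ∑ⱼ Δx S'(xⱼ - x_k) φⱼ(X)`, and the weighted Hamiltonian system
`ẋ_k = (1/wₖ)∂H/∂v_k`, `v̇_k = -(1/wₖ)∂H/∂x_k` coincides with the equations of motion
`ẋ_k = v_k`, `v̇_k = Z ∑ⱼ Δx S'(xⱼ - x_k) φⱼ(X)`. -/
theorem hamiltonian_partials_with_constraint (N : ℕ) [NeZero N] (hN : 3 ≤ N) (dx : ℝ)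
    (hdx : 0 < dx) (Np : ℕ) (Z : ℝ) (w : Fin Np → ℝ) (hw : ∀ k, w k ≠ 0)
    (S S' : ℝ → ℝ) (hS : ∀ x, HasDerivAt S (S' x) x) (hS' : Continuous S')
    (xg : Fin N → ℝ) (n0 T : Fin N → ℝ) (hn0 : ∀ j, 0 < n0 j) (hT : ∀ j, 0 < T j)
    (φ : (Fin Np → ℝ) → Fin N → ℝ) (hφ : Differentiable ℝ φ)
    (hcon : ∀ (X : Fin Np → ℝ) (j : Fin N),
      -(Z * ∑ k, w k * S (xg j - X k)) + (Amat N dx).mulVec (φ X) j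
        + n0 j * Real.exp (φ X j / T j) = 0)
    (H : (Fin Np → ℝ) → (Fin Np → ℝ) → ℝ)
    (hH : ∀ X V, H X V =
        -(dx / 2) * (φ X ⬝ᵥ (Amat N dx).mulVec (φ X))
          + Z * ∑ j, dx * ∑ k, w k * S (xg j - X k) * φ X j
          + (1 / 2) * ∑ k, w k * (V k) ^ 2
          - dx * ∑ j, T j * n0 j * Real.exp (φ X j / T j)) :
    (∀ (X V : Fin Np → ℝ) (k : Fin Np),
      HasDerivAt (fun t : ℝ => H (Function.update X k t) V)
        (-(Z * w k * ∑ j, dx * S' (xg j - X k) * φ X j)) (X k)) ∧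
    (∀ (X V : Fin Np → ℝ) (k : Fin Np),
      HasDerivAt (fun t : ℝ => H X (Function.update V k t)) (w k * V k) (V k)) ∧
    (∀ (X V : Fin Np → ℝ) (k : Fin Np),
      (1 / w k) * deriv (fun t : ℝ => H X (Function.update V k t)) (V k) = V k ∧
      -(1 / w k) * deriv (fun t : ℝ => H (Function.update X k t) V) (X k)
        = Z * ∑ j, dx * S' (xg j - X k) * φ X j) :=
  hamiltonian_partials_with_constraint_general N dx Np Z w hw S S' hS xg n0 T hT φ hφ hcon H hH
end

section
/- Let H : ℝ^M × ℝ^M → ℝ be differentiable, let w_1,…,w_M be positive reals with diagonal matrix 𝕎 = diag(w_1,…,w_M), let Δt > 0, and let (X⁰, V⁰), (X¹, V¹) ∈ ℝ^M × ℝ^M with (X¹, V¹) ≠ (X⁰, V⁰). With the Gonzalez discrete gradients ∇̄_X H, ∇̄_V H defined from (X⁰, V⁰) and (X¹, V¹) (midpoint gradient plus d_c times the increment, where d_c = (H(X¹,V¹) - H(X⁰,V⁰) - ∇H(midpoint)·(ΔX, ΔV))/(‖ΔX‖² + ‖ΔV‖²)), suppose the discrete gradient scheme holds: (X¹ - X⁰)/Δt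 = 𝕎^{-1}·∇̄_V H and (V¹ - V⁰)/Δt = -𝕎^{-1}·∇̄_X H. Then the scheme conserves energy exactly: H(X¹, V¹) = H(X⁰, V⁰). -/
open Matrix BigOperators

/-- the Gonzalez midpoint discrete gradient scheme
`(X¹-X⁰)/Δt = 𝕎⁻¹∇̄_V H`, `(V¹-V⁰)/Δt = -𝕎⁻¹∇̄_X H` conserves the energy exactly. -/
theorem gonzalez_scheme_energy_conservation (M : ℕ)
    (H : (Fin M → ℝ) → (Fin M → ℝ) → ℝ)
    (hH : Differentiable ℝ (fun p : (Fin M → ℝ) × (Fin M → ℝ) => H p.1 p.2))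
    (w : Fin M → ℝ) (hw : ∀ k, 0 < w k) (Δt : ℝ) (hΔt : 0 < Δt)
    (X0 X1 V0 V1 : Fin M → ℝ) (hne : (X1, V1) ≠ (X0, V0))
    (gX gV : Fin M → ℝ)
    (hgX : ∀ i, gX i = fderiv ℝ (fun p : (Fin M → ℝ) × (Fin M → ℝ) => H p.1 p.2)
        ((2 : ℝ)⁻¹ • (X0 + X1), (2 : ℝ)⁻¹ • (V0 + V1)) (Pi.single i 1, (0 : Fin M → ℝ)))
    (hgV : ∀ i, gV i = fderiv ℝ (fun p : (Fin M → ℝ) × (Fin M → ℝ) => H p.1 p.2)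
        ((2 : ℝ)⁻¹ • (X0 + X1), (2 : ℝ)⁻¹ • (V0 + V1)) ((0 : Fin M → ℝ), Pi.single i 1))
    (dc : ℝ)
    (hdc : dc = (H X1 V1 - H X0 V0 - gX ⬝ᵥ (X1 - X0) - gV ⬝ᵥ (V1 - V0))
        / ((X1 - X0) ⬝ᵥ (X1 - X0) + (V1 - V0) ⬝ᵥ (V1 - V0)))
    (hschemeX : ∀ k, (X1 k - X0 k) / Δt = (1 / w k) * (gV k + dc * (V1 k - V0 k)))
    (hschemeV : ∀ k, (V1 k - V0 k) / Δt = -(1 / w k) * (gX k + dc * (X1 k - X0 k))) :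
    H X1 V1 = H X0 V0 := by
  have hSnn : (0:ℝ) ≤ (X1 - X0) ⬝ᵥ (X1 - X0) + (V1 - V0) ⬝ᵥ (V1 - V0) := by
    have h1 : (0:ℝ) ≤ (X1 - X0) ⬝ᵥ (X1 - X0) :=
      Finset.sum_nonneg fun i _ => mul_self_nonneg _
    have h2 : (0:ℝ) ≤ (V1 - V0) ⬝ᵥ (V1 - V0) :=
      Finset.sum_nonneg fun i _ => mul_self_nonneg _
    linarith
  have hS : (X1 - X0) ⬝ᵥ (X1 - X0) + (V1 - V0) ⬝ᵥ (V1 - V0) ≠ 0 := by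
    intro h
    have h1 : (X1 - X0) ⬝ᵥ (X1 - X0) ≥ 0 :=
      Finset.sum_nonneg fun i _ => mul_self_nonneg _
    have h2 : (V1 - V0) ⬝ᵥ (V1 - V0) ≥ 0 :=
      Finset.sum_nonneg fun i _ => mul_self_nonneg _
    have h1' : (X1 - X0) ⬝ᵥ (X1 - X0) = 0 := le_antisymm (by linarith) h1
    have h2' : (V1 - V0) ⬝ᵥ (V1 - V0) = 0 := le_antisymm (by linarith) h2
    have hX : X1 = X0 := by
      funext i
      have := (Finset.sum_eq_zero_iff_of_nonneg
        (fun j _ => mul_self_nonneg ((X1 - X0) j))).mp h1' i (Finset.mem_univ i)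
      have : (X1 - X0) i = 0 := by nlinarith [this]
      simpa [sub_eq_zero] using this
    have hV : V1 = V0 := by
      funext i
      have := (Finset.sum_eq_zero_iff_of_nonneg
        (fun j _ => mul_self_nonneg ((V1 - V0) j))).mp h2' i (Finset.mem_univ i)
      have : (V1 - V0) i = 0 := by nlinarith [this]
      simpa [sub_eq_zero] using this
    exact hne (by simp [hX, hV])
  have key : gX ⬝ᵥ (X1 - X0) + gV ⬝ᵥ (V1 - V0)
      + dc * ((X1 - X0) ⬝ᵥ (X1 - X0) + (V1 - V0) ⬝ᵥ (V1 - V0)) = 0 := by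
    have hterm : ∀ k, gX k * (X1 k - X0 k) + gV k * (V1 k - V0 k)
        + dc * ((X1 k - X0 k) * (X1 k - X0 k) + (V1 k - V0 k) * (V1 k - V0 k)) = 0 := by
      intro k
      have hwk := (hw k).ne'
      have eqX : X1 k - X0 k = Δt * ((1 / w k) * (gV k + dc * (V1 k - V0 k))) := by
        rw [← hschemeX k]; field_simp
      have eqV : V1 k - V0 k = Δt * (-(1 / w k) * (gX k + dc * (X1 k - X0 k))) := by
        rw [← hschemeV k]; field_simp
      linear_combination (gX k + dc * (X1 k - X0 k)) * eqX
        + (gV k + dc * (V1 k - V0 k)) * eqV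
    calc gX ⬝ᵥ (X1 - X0) + gV ⬝ᵥ (V1 - V0)
        + dc * ((X1 - X0) ⬝ᵥ (X1 - X0) + (V1 - V0) ⬝ᵥ (V1 - V0))
        = ∑ k : Fin M, (gX k * (X1 k - X0 k) + gV k * (V1 k - V0 k)
          + dc * ((X1 k - X0 k) * (X1 k - X0 k) + (V1 k - V0 k) * (V1 k - V0 k))) := by
          simp [dotProduct, Finset.sum_add_distrib, Finset.mul_sum, mul_add]
      _ = 0 := by simp [hterm]
  have hdc' : dc * ((X1 - X0) ⬝ᵥ (X1 - X0) + (V1 - V0) ⬝ᵥ (V1 - V0))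
      = H X1 V1 - H X0 V0 - gX ⬝ᵥ (X1 - X0) - gV ⬝ᵥ (V1 - V0) := by
    rw [hdc, div_mul_cancel₀ _ hS]
  linarith [key, hdc']
end

section
/- Let L > 0 and let Λ_1,…,Λ_N : ℝ → ℝ be continuously differentiable functions forming a partition of unity: ∑_{i=1}^N Λ_i(x) = 1 for all x ∈ ℝ. Let φ ∈ ℝ^N and set φ_h = ∑_{i=1}^N φ_i·Λ_i. Fix quadrature points x̂_j ∈ ℝ and weights ŵ_j (j = 1,…,N_q), particle positions x_k ∈ ℝ and weights w_k (k = 1,…,N_p), Z ∈ ℝ, and functions n₀, T : ℝ → ℝ with T > 0 at all quadrature points. Suppose the finite-element discrete Poisson–Boltzmann equation holds for every i = 1,…,N: ∫₀ᴸ φ_h'(x)·Λ_i'(x) dx + ∑_{j=1}^{N_q} ŵ_j·n₀(x̂_j)·exp(φ_h(x̂_j)/T(x̂_j))·Λ_i(x̂_j) = Z·∑_{k=1}^{N_p} w_k·Λ_i(x_k). Then the weak neutrality condition holds: ∑_{j=1}^{N_q} ŵ_j·n₀(x̂_j)·exp(φ_h(x̂_j)/T(x̂_j)) = Z·∑_{k=1}^{N_p}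 w_k. -/
/-! Sum the discrete equations over `i`. The partition of unity `∑ i, Λ i = 1` collapses the
quadrature and particle sums to their total weights, and its derivative `∑ i, Λ i' = 0` makes the
summed stiffness term vanish. -/

open Finset

theorem Finset.sum_deriv_eq_zero_of_sum_eq_const {ι 𝕜 F : Type*} [NontriviallyNormedField 𝕜]
    [NormedAddCommGroup F] [NormedSpace 𝕜 F] {s : Finset ι} {f : ι → 𝕜 → F}
    (hf : ∀ i ∈ s, Differentiable 𝕜 (f i)) {c : F} (hc : ∀ x, ∑ i ∈ s, f i x = c) (x : 𝕜) :
    ∑ i ∈ s, deriv (f i) x = 0 := by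
  rw [← deriv_fun_sum fun i hi => hf i hi x, funext hc, deriv_const]

theorem intervalIntegral.sum_integral_mul_eq_zero {ι : Type*} {s : Finset ι} {a b : ℝ}
    {μ : MeasureTheory.Measure ℝ} {f : ℝ → ℝ} {g : ι → ℝ → ℝ}
    (hfg : ∀ i ∈ s, IntervalIntegrable (fun x => f x * g i x) μ a b)
    (hg : ∀ x, ∑ i ∈ s, g i x = 0) :
    ∑ i ∈ s, ∫ x in a..b, f x * g i x ∂μ = 0 := by
  simp only [← intervalIntegral.integral_finsetSum hfg, ← mul_sum, hg, mul_zero,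
    intervalIntegral.integral_zero]

theorem Finset.sum_sum_mul_comp_eq_sum_of_sum_eq_one {ι κ α R : Type*} [NonAssocSemiring R]
    {s : Finset ι} {Λ : ι → α → R} (hΛ : ∀ x, ∑ i ∈ s, Λ i x = 1)
    (t : Finset κ) (a : κ → R) (y : κ → α) :
    ∑ i ∈ s, ∑ j ∈ t, a j * Λ i (y j) = ∑ j ∈ t, a j := by
  rw [sum_comm]
  simp only [← mul_sum, hΛ, mul_one]

theorem fem_weak_neutrality_general (L : ℝ) (N Nq Np : ℕ)
    (Λ : Fin N → ℝ → ℝ) (hΛ : ∀ i, ContDiff ℝ 1 (Λ i))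
    (hPU : ∀ x : ℝ, ∑ i, Λ i x = 1)
    (φ : Fin N → ℝ) (φh : ℝ → ℝ) (hφh : ∀ x, φh x = ∑ i, φ i * Λ i x)
    (xq wq : Fin Nq → ℝ) (xp w : Fin Np → ℝ) (Z : ℝ)
    (n0 T : ℝ → ℝ)
    (heq : ∀ i, (∫ x in (0:ℝ)..L, deriv φh x * deriv (Λ i) x)
        + ∑ j, wq j * n0 (xq j) * Real.exp (φh (xq j) / T (xq j)) * Λ i (xq j)
        = Z * ∑ k, w k * Λ i (xp k)) :
    ∑ j, wq j * n0 (xq j) * Real.exp (φh (xq j) / T (xq j)) = Z * ∑ k, w k := by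
  have hφh' : Continuous (deriv φh) := by
    rw [show φh = fun x => ∑ i, φ i * Λ i x from funext hφh]
    exact (ContDiff.sum fun i _ => contDiff_const.mul (hΛ i)).continuous_deriv le_rfl
  have hstiffness : ∑ i, ∫ x in (0:ℝ)..L, deriv φh x * deriv (Λ i) x = 0 :=
    intervalIntegral.sum_integral_mul_eq_zero
      (fun i _ => (hφh'.mul ((hΛ i).continuous_deriv le_rfl)).intervalIntegrable _ _)
      (sum_deriv_eq_zero_of_sum_eq_const (fun i _ => (hΛ i).differentiable one_ne_zero) hPU)
  have hsum := sum_congr rfl fun i (_ : i ∈ univ) => heq i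
  rwa [sum_add_distrib, hstiffness, zero_add, ← mul_sum,
    sum_sum_mul_comp_eq_sum_of_sum_eq_one hPU, sum_sum_mul_comp_eq_sum_of_sum_eq_one hPU] at hsum

/-- for the finite-element/particle discretization of the Poisson–Boltzmann
equation with basis functions forming a partition of unity, summing the discrete equations
over the basis index yields the weak neutrality condition. -/
theorem fem_weak_neutrality (L : ℝ) (hL : 0 < L) (N Nq Np : ℕ)
    (Λ : Fin N → ℝ → ℝ) (hΛ : ∀ i, ContDiff ℝ 1 (Λ i))
    (hPU : ∀ x : ℝ, ∑ i, Λ i x = 1)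
    (φ : Fin N → ℝ) (φh : ℝ → ℝ) (hφh : ∀ x, φh x = ∑ i, φ i * Λ i x)
    (xq wq : Fin Nq → ℝ) (xp w : Fin Np → ℝ) (Z : ℝ)
    (n0 T : ℝ → ℝ) (hT : ∀ j, 0 < T (xq j))
    (heq : ∀ i, (∫ x in (0:ℝ)..L, deriv φh x * deriv (Λ i) x)
        + ∑ j, wq j * n0 (xq j) * Real.exp (φh (xq j) / T (xq j)) * Λ i (xq j)
        = Z * ∑ k, w k * Λ i (xp k)) :
    ∑ j, wq j * n0 (xq j) * Real.exp (φh (xq j) / T (xq j)) = Z * ∑ k, w k :=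
  fem_weak_neutrality_general L N Nq Np Λ hΛ hPU φ φh hφh xq wq xp w Z n0 T heq
end
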